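/- arXiv:quant-ph/0507282 — 4 statements merged into one kernel-verified Lean document; each statement's English description precedes it below -/
import Mathlib

section
/- The function f(x) = H((1 − e^x)/2) is concave on the interval (−∞, 0], where H(t) = −t log t − (1−t) log(1−t) is the binary entropy. -/
lemma himg : (fun x => (1 - Real.exp x) / 2) '' Set.Iic (0:ℝ) = Set.Ico 0 (2⁻¹ : ℝ) := by
  ext y
  constructor
  · rintro ⟨x, hx, rfl⟩
    have h1 : Real.exp x ≤ 1 := Real.exp_le_one_iff.mpr hx
    have h2 : 0 < Real.exp x := Real.exp_pos x
    constructor <;> [linarith; (rw [div_lt_iff₀ (by norm_num)]; linarith)]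
  · rintro ⟨h0, h1⟩
    refine ⟨Real.log (1 - 2*y), ?_, ?_⟩
    · apply Real.log_nonpos <;> nlinarith
    · show (1 - Real.exp _) / 2 = y
      rw [Real.exp_log (by nlinarith)]; ring
/-- **Concavity of `x ↦ H((1 - eˣ)/2)` on `(-∞, 0]`.** -/
theorem concaveOn_binEntropy_one_sub_exp :
    ConcaveOn ℝ (Set.Iic (0:ℝ)) (fun x => Real.binEntropy ((1 - Real.exp x) / 2)) := by
  have hh : ConcaveOn ℝ (Set.Iic (0:ℝ)) (fun x => (1 - Real.exp x) / 2) := by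
    have hexp : ConvexOn ℝ (Set.Iic (0:ℝ)) Real.exp :=
      convexOn_exp.subset (Set.subset_univ _) (convex_Iic _)
    have := (hexp.neg.smul (by norm_num : (0:ℝ) ≤ 1/2)).add_const (1/2)
    convert this using 2 with x
    · rfl
    · rfl
    · rfl
    simp only [Pi.add_apply, Pi.neg_apply, smul_eq_mul]
    ring
  have hg : ConcaveOn ℝ ((fun x => (1 - Real.exp x) / 2) '' Set.Iic (0:ℝ)) Real.binEntropy := by
    rw [himg]
    exact Real.strictConcave_binEntropy.concaveOn.subset
      (Set.Ico_subset_Icc_self.trans (Set.Icc_subset_Icc le_rfl (by norm_num))) (convex_Ico _ _)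
  have hmono : MonotoneOn Real.binEntropy ((fun x => (1 - Real.exp x) / 2) '' Set.Iic (0:ℝ)) := by
    rw [himg]
    exact Real.binEntropy_strictMonoOn.monotoneOn.mono Set.Ico_subset_Icc_self
  exact hg.comp hh hmono
end

section
/- Let n ≥ 1 and let α_1,…,α_n and β_1,…,β_n be real numbers with 1 ≥ α_1 ≥ … ≥ α_n ≥ 0 and 1 ≥ β_1 ≥ … ≥ β_n ≥ 0. Define probability distributions P and Q on {0,1}^n by P(x) = 2^{−n} ∏_{j=1}^n (1+(−1)^{x_j} α_j) and Q(y) = 2^{−n} ∏_{j=1}^n (1+(−1)^{y_j} β_j). If ∏_{j=1}^k α_j ≤ ∏_{j=1}^k β_j for all k = 1,…,n, with equality for k = n, then P is majorized by Q. -/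
noncomputable section

/-- `f` is majorized by `g`: equal total sums, and for every subset `S` of the domain
of `f` there is a subset `T` of the domain of `g` with `|T| = |S|` and
`Σ_{x∈S} f x ≤ Σ_{y∈T} g y` (equivalently, every sum of `k` largest values of `f`
is at most the sum of the `k` largest values of `g`). -/
def MajorizedBy {α β : Type*} [Fintype α] [Fintype β]
    (f : α → ℝ) (g : β → ℝ) : Prop :=
  (∑ x, f x = ∑ y, g y) ∧
  ∀ S : Finset α, ∃ T : Finset β, T.card = S.card ∧ ∑ x ∈ S, f x ≤ ∑ y ∈ T, g y

end

/-! ### Auxiliary machinery -/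

noncomputable section Aux

open Finset

/-- unnormalized product distribution -/
def Wdist {ι : Type*} [Fintype ι] (γ : ι → ℝ) : (ι → Bool) → ℝ :=
  fun x => ∏ j, (1 + (if x j then (-1:ℝ) else 1) * γ j)

theorem MajorizedBy.trans' {A B C : Type*} [Fintype A] [Fintype B] [Fintype C]
    {f : A → ℝ} {g : B → ℝ} {h : C → ℝ}
    (h1 : MajorizedBy f g) (h2 : MajorizedBy g h) : MajorizedBy f h := by
  refine ⟨h1.1.trans h2.1, fun S => ?_⟩
  obtain ⟨T, hT, hle⟩ := h1.2 S
  obtain ⟨U, hU, hle'⟩ := h2.2 T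
  exact ⟨U, hU.trans hT, hle.trans hle'⟩

theorem MajorizedBy.smul' {A B : Type*} [Fintype A] [Fintype B]
    {f : A → ℝ} {g : B → ℝ} (c : ℝ) (hc : 0 ≤ c)
    (h : MajorizedBy f g) : MajorizedBy (fun x => c * f x) (fun y => c * g y) := by
  constructor
  · rw [← Finset.mul_sum, ← Finset.mul_sum, h.1]
  · intro S
    obtain ⟨T, hT, hle⟩ := h.2 S
    exact ⟨T, hT, by rw [← Finset.mul_sum, ← Finset.mul_sum]; exact mul_le_mul_of_nonneg_left hle hc⟩

theorem MajorizedBy.of_comp_equiv {A B C D : Type*} [Fintype A] [Fintype B] [Fintype C] [Fintype D]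
    [DecidableEq A] [DecidableEq B] [DecidableEq C] [DecidableEq D]
    (e : A ≃ B) (e' : C ≃ D) {f : B → ℝ} {g : D → ℝ}
    (h : MajorizedBy f g) : MajorizedBy (fun a => f (e a)) (fun c => g (e' c)) := by
  constructor
  · rw [Equiv.sum_comp e f, Equiv.sum_comp e' g]; exact h.1
  · intro S
    obtain ⟨T, hT, hle⟩ := h.2 (S.image e)
    refine ⟨T.image e'.symm, ?_, ?_⟩
    · rw [Finset.card_image_of_injective _ e'.symm.injective, hT,
        Finset.card_image_of_injective _ e.injective]
    · rw [Finset.sum_image (fun x _ y _ hxy => e'.symm.injective hxy)]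
      calc ∑ a ∈ S, f (e a) = ∑ b ∈ S.image e, f b := by
            rw [Finset.sum_image (fun x _ y _ hxy => e.injective hxy)]
        _ ≤ ∑ y ∈ T, g y := hle
        _ = ∑ x ∈ T, g (e' (e'.symm x)) := by simp

theorem MajorizedBy.tensor {A B C : Type*} [Fintype A] [Fintype B] [Fintype C]
    [DecidableEq A] [DecidableEq B] [DecidableEq C]
    {f : A → ℝ} {g : B → ℝ} (r : C → ℝ) (hr : ∀ c, 0 ≤ r c)
    (h : MajorizedBy f g) :
    MajorizedBy (fun p : A × C => f p.1 * r p.2) (fun p : B × C => g p.1 * r p.2) := by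
  constructor
  · rw [Fintype.sum_prod_type, Fintype.sum_prod_type]
    simp only [← Finset.mul_sum, ← Finset.sum_mul, h.1]
  · intro S
    set Sc : C → Finset A := fun c => (S.filter (fun p => p.2 = c)).image Prod.fst with hSc
    have hinj : ∀ c : C, Set.InjOn (Prod.fst : A × C → A) (S.filter (fun p => p.2 = c)) := by
      intro c p hp q hq hpq
      simp only [coe_filter, Set.mem_setOf_eq, mem_coe] at hp hq
      exact Prod.ext hpq (hp.2.trans hq.2.symm)
    choose T hTcard hTle using fun c => h.2 (Sc c)
    have hdisj : ∀ c ∈ Finset.univ, ∀ c' ∈ Finset.univ, c ≠ c' →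
        Disjoint ((T c).image (fun b => (b, c))) ((T c').image (fun b => (b, c'))) := by
      intro c _ c' _ hcc'
      simp only [Finset.disjoint_left, Finset.mem_image]
      rintro p ⟨b, _, rfl⟩ ⟨b', _, h'⟩
      exact hcc' (congrArg Prod.snd h').symm
    refine ⟨Finset.univ.biUnion (fun c => (T c).image (fun b => (b, c))), ?_, ?_⟩
    · rw [Finset.card_biUnion hdisj]
      have : ∀ c, ((T c).image (fun b => (b, c))).card = (S.filter (fun p => p.2 = c)).card := by
        intro c
        rw [Finset.card_image_of_injective _ (fun x y hxy => (Prod.mk.injEq _ _ _ _ ▸ hxy).1), hTcard,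
          hSc]
        exact Finset.card_image_of_injOn (hinj c)
      rw [Finset.sum_congr rfl (fun c _ => this c)]
      exact (Finset.card_eq_sum_card_fiberwise (f := Prod.snd) (fun p _ => Finset.mem_univ _)).symm
    · rw [Finset.sum_biUnion (fun c _ c' _ hcc' => hdisj c (Finset.mem_univ c) c' (Finset.mem_univ c') hcc')]
      have key : ∀ c, ∑ p ∈ (T c).image (fun b => (b, c)), g p.1 * r p.2
          = (∑ b ∈ T c, g b) * r c := by
        intro c
        rw [Finset.sum_image (fun x _ y _ hxy => (Prod.mk.injEq _ _ _ _ ▸ hxy).1)]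
        simp [Finset.sum_mul]
      have key2 : ∀ c, ∑ p ∈ S.filter (fun p => p.2 = c), f p.1 * r p.2
          = (∑ a ∈ Sc c, f a) * r c := by
        intro c
        rw [hSc, Finset.sum_image (fun x hx y hy hxy => hinj c hx hy hxy), Finset.sum_mul]
        refine Finset.sum_congr rfl (fun p hp => ?_)
        rw [(Finset.mem_filter.mp hp).2]
      calc ∑ p ∈ S, f p.1 * r p.2
          = ∑ c : C, ∑ p ∈ S.filter (fun p => p.2 = c), f p.1 * r p.2 :=
            (Finset.sum_fiberwise S Prod.snd _).symm
        _ ≤ ∑ c : C, (∑ b ∈ T c, g b) * r c := by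
            refine Finset.sum_le_sum (fun c _ => ?_)
            rw [key2 c]
            exact mul_le_mul_of_nonneg_right (hTle c) (hr c)
        _ = ∑ c : C, ∑ p ∈ (T c).image (fun b => (b, c)), g p.1 * r p.2 := by
            simp only [key]

set_option maxHeartbeats 1000000 in
/-- base 2x2 compression lemma -/
theorem base2 (u v q1 q2 : ℝ) (h1 : 0 ≤ q2) (h2 : q2 ≤ u) (h3 : u ≤ q1)
    (h4 : q2 ≤ v) (h5 : v ≤ q1) (h6 : q1 ≤ 1) (hp : u * v = q1 * q2) :
    MajorizedBy
      (fun p : Bool × Bool => (1 + (if p.1 then (-1:ℝ) else 1) * u) * (1 + (if p.2 then (-1:ℝ) else 1) * v))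
      (fun p : Bool × Bool => (1 + (if p.1 then (-1:ℝ) else 1) * q1) * (1 + (if p.2 then (-1:ℝ) else 1) * q2)) := by
  have hq1 : 0 ≤ q1 := le_trans (h1.trans h2) h3
  have hu0 : 0 ≤ u := h1.trans h2
  have hv0 : 0 ≤ v := h1.trans h4
  have hq2 : q2 ≤ 1 := le_trans (h2.trans h3) h6
  have hkey : q1 * (u + v) ≤ q1 * (q1 + q2) := by
    nlinarith [mul_nonneg (sub_nonneg.2 h3) (sub_nonneg.2 h5)]
  have hsum : u + v ≤ q1 + q2 := by
    rcases eq_or_lt_of_le hq1 with h | h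
    · have hu : u = 0 := le_antisymm (h ▸ h3) hu0
      have hv : v = 0 := le_antisymm (h ▸ h5) hv0
      have hq2' : q2 = 0 := le_antisymm (hu ▸ h2) h1
      simp [hu, hv, hq2', ← h]
    · exact le_of_mul_le_mul_left hkey h
  have huv0 : 0 ≤ u * v := mul_nonneg hu0 hv0
  have huvq : u * v ≤ q1 := hp ▸ (by nlinarith : q1 * q2 ≤ q1)
  constructor
  · simp [Fintype.sum_prod_type, Fintype.sum_bool]; ring
  · intro S
    fin_cases S
    · exact ⟨∅, rfl, by simp⟩
    · refine ⟨({(false,false)} : Finset (Bool×Bool)), by decide, ?_⟩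
      simp [Fintype.sum_prod_type, Fintype.sum_bool]
      try nlinarith [hsum, hp, huv0, huvq, hu0, hv0, hq1, h1, h6, hq2]
    · refine ⟨({(false,false)} : Finset (Bool×Bool)), by decide, ?_⟩
      simp [Fintype.sum_prod_type, Fintype.sum_bool]
      try nlinarith [hsum, hp, huv0, huvq, hu0, hv0, hq1, h1, h6, hq2]
    · refine ⟨({(false,false),(false,true)} : Finset (Bool×Bool)), by decide, ?_⟩
      simp [Fintype.sum_prod_type, Fintype.sum_bool]
      try nlinarith [hsum, hp, huv0, huvq, hu0, hv0, hq1, h1, h6, hq2]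
    · refine ⟨({(false,false)} : Finset (Bool×Bool)), by decide, ?_⟩
      simp [Fintype.sum_prod_type, Fintype.sum_bool]
      try nlinarith [hsum, hp, huv0, huvq, hu0, hv0, hq1, h1, h6, hq2]
    · refine ⟨({(false,false),(false,true)} : Finset (Bool×Bool)), by decide, ?_⟩
      simp [Fintype.sum_prod_type, Fintype.sum_bool]
      try nlinarith [hsum, hp, huv0, huvq, hu0, hv0, hq1, h1, h6, hq2]
    · refine ⟨({(false,false),(false,true)} : Finset (Bool×Bool)), by decide, ?_⟩
      simp [Fintype.sum_prod_type, Fintype.sum_bool]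
      try nlinarith [hsum, hp, huv0, huvq, hu0, hv0, hq1, h1, h6, hq2]
    · refine ⟨({(false,false),(false,true),(true,false)} : Finset (Bool×Bool)), by decide, ?_⟩
      simp [Fintype.sum_prod_type, Fintype.sum_bool]
      try nlinarith [hsum, hp, huv0, huvq, hu0, hv0, hq1, h1, h6, hq2]
    · refine ⟨({(false,false)} : Finset (Bool×Bool)), by decide, ?_⟩
      simp [Fintype.sum_prod_type, Fintype.sum_bool]
      try nlinarith [hsum, hp, huv0, huvq, hu0, hv0, hq1, h1, h6, hq2]
    · refine ⟨({(false,false),(false,true)} : Finset (Bool×Bool)), by decide, ?_⟩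
      simp [Fintype.sum_prod_type, Fintype.sum_bool]
      try nlinarith [hsum, hp, huv0, huvq, hu0, hv0, hq1, h1, h6, hq2]
    · refine ⟨({(false,false),(false,true)} : Finset (Bool×Bool)), by decide, ?_⟩
      simp [Fintype.sum_prod_type, Fintype.sum_bool]
      try nlinarith [hsum, hp, huv0, huvq, hu0, hv0, hq1, h1, h6, hq2]
    · refine ⟨({(false,false),(false,true),(true,false)} : Finset (Bool×Bool)), by decide, ?_⟩
      simp [Fintype.sum_prod_type, Fintype.sum_bool]
      try nlinarith [hsum, hp, huv0, huvq, hu0, hv0, hq1, h1, h6, hq2]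
    · refine ⟨({(false,false),(false,true)} : Finset (Bool×Bool)), by decide, ?_⟩
      simp [Fintype.sum_prod_type, Fintype.sum_bool]
      try nlinarith [hsum, hp, huv0, huvq, hu0, hv0, hq1, h1, h6, hq2]
    · refine ⟨({(false,false),(false,true),(true,false)} : Finset (Bool×Bool)), by decide, ?_⟩
      simp [Fintype.sum_prod_type, Fintype.sum_bool]
      try nlinarith [hsum, hp, huv0, huvq, hu0, hv0, hq1, h1, h6, hq2]
    · refine ⟨({(false,false),(false,true),(true,false)} : Finset (Bool×Bool)), by decide, ?_⟩
      simp [Fintype.sum_prod_type, Fintype.sum_bool]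
      try nlinarith [hsum, hp, huv0, huvq, hu0, hv0, hq1, h1, h6, hq2]
    · refine ⟨(Finset.univ : Finset (Bool×Bool)), by decide, ?_⟩
      simp [Fintype.sum_prod_type, Fintype.sum_bool]
      try nlinarith [hsum, hp, huv0, huvq, hu0, hv0, hq1, h1, h6, hq2]

theorem base1 (u v : ℝ) (h0 : 0 ≤ u) (huv : u ≤ v) :
    MajorizedBy (fun s : Bool => 1 + (if s then (-1:ℝ) else 1) * u)
      (fun s : Bool => 1 + (if s then (-1:ℝ) else 1) * v) := by
  constructor
  · simp [Fintype.sum_bool]; ring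
  · intro S
    fin_cases S
    · exact ⟨∅, rfl, by simp⟩
    · exact ⟨{false}, rfl, by simp; linarith⟩
    · exact ⟨{false}, rfl, by simp; linarith⟩
    · exact ⟨Finset.univ, rfl, by simp [Fintype.sum_bool]; ring_nf; exact le_refl _⟩

lemma Wsplit {ι : Type*} [Fintype ι] [DecidableEq ι] (γ : ι → ℝ) (j₀ : ι) (x : ι → Bool) :
    Wdist γ x = (1 + (if x j₀ then (-1:ℝ) else 1) * γ j₀) *
      ∏ j : {j : ι // j ≠ j₀}, (1 + (if x j.1 then (-1:ℝ) else 1) * γ j.1) := by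
  rw [Wdist, ← Finset.mul_prod_erase Finset.univ _ (Finset.mem_univ j₀)]
  congr 1
  exact Finset.prod_subtype (Finset.univ.erase j₀) (fun j => by simp) _

lemma Wsplit2 {ι : Type*} [Fintype ι] [DecidableEq ι] (γ : ι → ℝ) (j₀ j₁ : ι) (hne : j₀ ≠ j₁)
    (x : ι → Bool) :
    Wdist γ x = ((1 + (if x j₀ then (-1:ℝ) else 1) * γ j₀) * (1 + (if x j₁ then (-1:ℝ) else 1) * γ j₁)) *
      ∏ j : {j : ι // j ≠ j₀ ∧ j ≠ j₁}, (1 + (if x j.1 then (-1:ℝ) else 1) * γ j.1) := by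
  rw [Wdist, ← Finset.mul_prod_erase Finset.univ _ (Finset.mem_univ j₀),
    ← Finset.mul_prod_erase (Finset.univ.erase j₀) _
      (Finset.mem_erase.mpr ⟨Ne.symm hne, Finset.mem_univ j₁⟩), ← mul_assoc]
  congr 1
  exact Finset.prod_subtype ((Finset.univ.erase j₀).erase j₁)
    (fun j => by simp [and_comm]) _

/-- equiv splitting two coordinates -/
def E3 {ι : Type*} [DecidableEq ι] (j₀ j₁ : ι) (hne : j₀ ≠ j₁) :
    (ι → Bool) ≃ (Bool × Bool) × ({j : ι // j ≠ j₀ ∧ j ≠ j₁} → Bool) where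
  toFun x := ((x j₀, x j₁), fun j => x j.1)
  invFun q j := if h : j = j₀ then q.1.1 else if h' : j = j₁ then q.1.2 else q.2 ⟨j, h, h'⟩
  left_inv x := by
    funext j
    by_cases h : j = j₀
    · subst h; simp
    · by_cases h' : j = j₁
      · subst h'; simp [h]
      · simp [h, h']
  right_inv q := by
    ext j
    · simp
    · simp [Ne.symm hne]
    · simp [j.2.1, j.2.2]

/-- surgery: replacing two coordinates of `β` by an "inner" pair with equal product -/
lemma surgery {ι : Type*} [Fintype ι] [DecidableEq ι] (β : ι → ℝ)
    (hβ1 : ∀ j, |β j| ≤ 1) (j₀ j₁ : ι) (hne : j₀ ≠ j₁) (u v : ℝ)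
    (h1 : 0 ≤ β j₁) (h2 : β j₁ ≤ u) (h3 : u ≤ β j₀) (h4 : β j₁ ≤ v) (h5 : v ≤ β j₀)
    (h6 : β j₀ ≤ 1) (hp : u * v = β j₀ * β j₁) :
    MajorizedBy (Wdist (Function.update (Function.update β j₀ u) j₁ v)) (Wdist β) := by
  classical
  set R := {j : ι // j ≠ j₀ ∧ j ≠ j₁}
  set r : (R → Bool) → ℝ := fun z => ∏ j : R, (1 + (if z j then (-1:ℝ) else 1) * β j.1) with hr_def
  have hr : ∀ z, 0 ≤ r z := by
    intro z
    refine Finset.prod_nonneg (fun j _ => ?_)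
    rcases abs_le.mp (hβ1 j.1) with ⟨hl, hu⟩
    cases z j <;> simp <;> linarith
  have base := base2 u v (β j₀) (β j₁) h1 h2 h3 h4 h5 h6 hp
  have t := base.tensor r hr
  have h' := t.of_comp_equiv (E3 j₀ j₁ hne) (E3 j₀ j₁ hne)
  convert h' using 1
  · funext x
    rw [Wsplit2 _ j₀ j₁ hne x]
    have e1 : Function.update (Function.update β j₀ u) j₁ v j₀ = u := by
      rw [Function.update_of_ne hne, Function.update_self]
    have e2 : Function.update (Function.update β j₀ u) j₁ v j₁ = v := Function.update_self _ _ _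
    rw [e1, e2]
    show _ = (1 + _ * u) * (1 + _ * v) * r _
    congr 1
    refine Finset.prod_congr rfl (fun j _ => ?_)
    rw [Function.update_of_ne j.2.2, Function.update_of_ne j.2.1]
    rfl
  · funext x
    rw [Wsplit2 _ j₀ j₁ hne x]
    rfl

lemma raise {ι : Type*} [Fintype ι] [DecidableEq ι] (β : ι → ℝ)
    (hβ1 : ∀ j, |β j| ≤ 1) (j₀ : ι) (u : ℝ) (h0 : 0 ≤ u) (hu : u ≤ β j₀) :
    MajorizedBy (Wdist (Function.update β j₀ u)) (Wdist β) := by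
  classical
  set r : ({j : ι // j ≠ j₀} → Bool) → ℝ :=
    fun z => ∏ j : {j : ι // j ≠ j₀}, (1 + (if z j then (-1:ℝ) else 1) * β j.1) with hr_def
  have hr : ∀ z, 0 ≤ r z := by
    intro z
    refine Finset.prod_nonneg (fun j _ => ?_)
    rcases abs_le.mp (hβ1 j.1) with ⟨hl, hup⟩
    cases z j <;> simp <;> linarith
  have t := (base1 u (β j₀) h0 hu).tensor r hr
  have h' := t.of_comp_equiv (Equiv.piSplitAt j₀ (fun _ => Bool)) (Equiv.piSplitAt j₀ (fun _ => Bool))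
  convert h' using 1
  · funext x
    rw [Wsplit _ j₀ x, Function.update_self]
    show _ = (1 + _ * u) * r _
    congr 1
    refine Finset.prod_congr rfl (fun j _ => ?_)
    rw [Function.update_of_ne j.2]
    rfl
  · funext x
    rw [Wsplit _ j₀ x]
    rfl

lemma strip_glue {n : ℕ} {ι : Type*} [Fintype ι] [DecidableEq ι]
    (α : Fin (n+1) → ℝ) (β : ι → ℝ) (j₀ : ι) (hj : β j₀ = α 0) (h1 : |α 0| ≤ 1)
    (h : MajorizedBy (Wdist (fun i : Fin n => α i.succ)) (Wdist (fun j : {j : ι // j ≠ j₀} => β j.1))) :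
    MajorizedBy (Wdist α) (Wdist β) := by
  classical
  set r : Bool → ℝ := fun s => 1 + (if s then (-1:ℝ) else 1) * α 0 with hr_def
  have hr : ∀ s, 0 ≤ r s := by
    rcases abs_le.mp h1 with ⟨hl, hup⟩
    intro s; cases s <;> simp [hr_def] <;> linarith
  have t := h.tensor r hr
  have h' := t.of_comp_equiv
    ((Fin.consEquiv fun _ => Bool).symm.trans (Equiv.prodComm _ _))
    ((Equiv.piSplitAt j₀ (fun _ => Bool)).trans (Equiv.prodComm _ _))
  convert h' using 1
  · funext x
    rw [Wdist, Fin.prod_univ_succ, mul_comm]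
    rfl
  · funext x
    rw [Wsplit _ j₀ x, mul_comm, hj]
    rfl

def pref {n : ℕ} (α : Fin n → ℝ) (m : ℕ) : ℝ :=
  ∏ j ∈ Finset.univ.filter (fun j : Fin n => j.val < m), α j

lemma pref_zero {n} (α : Fin n → ℝ) : pref α 0 = 1 := by simp [pref]

lemma pref_succ {n : ℕ} (α : Fin (n+1) → ℝ) (m : ℕ) :
    pref α (m+1) = α 0 * pref (fun i : Fin n => α i.succ) m := by
  rw [pref, Finset.prod_filter, Fin.prod_univ_succ]
  simp only [Fin.val_zero, Nat.zero_lt_succ, if_pos, Fin.val_succ, Nat.succ_lt_succ_iff]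
  rw [pref, Finset.prod_filter]

lemma pref_nonneg {n} (α : Fin n → ℝ) (h : ∀ j, 0 ≤ α j) (m : ℕ) : 0 ≤ pref α m :=
  Finset.prod_nonneg fun j _ => h j

lemma pref_le_pow {n : ℕ} (α : Fin n → ℝ) (a : ℝ) (h0 : ∀ j, 0 ≤ α j) (hle : ∀ j, α j ≤ a)
    (m : ℕ) (hm : m ≤ n) : pref α m ≤ a ^ m := by
  induction n generalizing m with
  | zero => interval_cases m; simp [pref_zero]
  | succ n ih =>
    cases m with
    | zero => simp [pref_zero]
    | succ m =>
      rw [pref_succ, pow_succ']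
      have ha : 0 ≤ a := le_trans (h0 0) (hle 0)
      exact mul_le_mul (hle 0)
        (ih (fun i : Fin n => α i.succ) (fun j => h0 _) (fun j => hle _) m (by omega))
        (pref_nonneg _ (fun j => h0 _) m) ha

lemma card_filter_lt {n : ℕ} (m : ℕ) (hm : m ≤ n) :
    (Finset.univ.filter (fun j : Fin n => j.val < m)).card = m := by
  have h : Finset.univ.filter (fun j : Fin n => j.val < m)
      = Finset.univ.image (fun i : Fin m => Fin.castLE hm i) := by
    ext j
    simp only [Finset.mem_filter, Finset.mem_univ, true_and, Finset.mem_image]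
    constructor
    · intro hj; exact ⟨⟨j.val, hj⟩, by apply Fin.ext; rfl⟩
    · rintro ⟨i, rfl⟩; exact i.isLt
  rw [h, Finset.card_image_of_injective _ (Fin.castLE_injective hm), Finset.card_univ,
    Fintype.card_fin]

lemma pow_card_le_prod' {ι : Type*} (s : Finset ι) (f : ι → ℝ) (a : ℝ) (ha : 0 ≤ a)
    (h : ∀ x ∈ s, a ≤ f x) : a ^ s.card ≤ ∏ x ∈ s, f x := by
  rw [← Finset.prod_const]
  exact Finset.prod_le_prod (fun i _ => ha) h

end Aux

open Finset in
set_option maxHeartbeats 1000000 in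
theorem mainInd : ∀ (n : ℕ) (ι : Type) [Fintype ι] [DecidableEq ι],
    Fintype.card ι = n → ∀ (α : Fin n → ℝ) (β : ι → ℝ),
    (∀ j, 0 ≤ α j) → (∀ j k : Fin n, j ≤ k → α k ≤ α j) → (∀ j, α j ≤ 1) →
    (∀ j, 0 ≤ β j) → (∀ j, β j ≤ 1) →
    (∀ m : ℕ, m ≤ n → ∃ S : Finset ι, S.card = m ∧ pref α m ≤ ∏ j ∈ S, β j) →
    MajorizedBy (Wdist α) (Wdist β) := by
  intro n
  induction n with
  | zero =>
    intro ι _ _ hcard α β _ _ _ _ _ _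
    haveI : IsEmpty ι := Fintype.card_eq_zero_iff.mp hcard
    have h1 : ∀ x : Fin 0 → Bool, Wdist α x = 1 := fun x => by simp [Wdist]
    have h2 : ∀ y : ι → Bool, Wdist β y = 1 := fun y => by simp [Wdist]
    constructor
    · rw [Fintype.sum_unique (Wdist α), Fintype.sum_unique (Wdist β), h1, h2]
    · intro S
      rcases S.eq_empty_or_nonempty with rfl | hSne
      · exact ⟨∅, by simp, by simp⟩
      · obtain ⟨x, hx⟩ := hSne
        have hS : S = {x} := Finset.eq_singleton_iff_unique_mem.mpr
          ⟨hx, fun y _ => Subsingleton.elim y x⟩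
        refine ⟨{fun j => (this.elim j : Bool)}, by simp [hS], ?_⟩
        rw [hS, Finset.sum_singleton, Finset.sum_singleton, h1, h2]
  | succ n ih =>
    intro ι instF instD hcard α β hα0 hαmono hα1 hβ0 hβ1 H3
    have hβabs : ∀ j, |β j| ≤ 1 := fun j => abs_le.mpr ⟨by linarith [hβ0 j], hβ1 j⟩
    set a := α 0 with ha_def
    have hαa : ∀ j, α j ≤ a := fun j => hαmono 0 j (Fin.zero_le j)
    have ha0 : 0 ≤ a := hα0 0
    have ha1 : a ≤ 1 := hα1 0
    set α' : Fin n → ℝ := fun i => α i.succ with hα'_def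
    have hα'0 : ∀ j, 0 ≤ α' j := fun j => hα0 _
    have hα'a : ∀ j, α' j ≤ a := fun j => hαa _
    -- the case where β matches a somewhere
    have key : ∀ (β : ι → ℝ), (∀ j, 0 ≤ β j) → (∀ j, β j ≤ 1) →
        (∀ m : ℕ, m ≤ n+1 → ∃ S : Finset ι, S.card = m ∧ pref α m ≤ ∏ j ∈ S, β j) →
        ∀ j₀ : ι, β j₀ = a → MajorizedBy (Wdist α) (Wdist β) := by
      intro β hβ0 hβ1 H3 j₀ hj₀
      have hcard' : Fintype.card {j : ι // j ≠ j₀} = n := by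
        have h := Set.card_ne_eq j₀ (α := ι)
        simp only [hcard] at h
        have : Fintype.card {j : ι // j ≠ j₀} = Fintype.card {x : ι | x ≠ j₀} := by
          apply Fintype.card_congr; rfl
        omega
      have H3' : ∀ m : ℕ, m ≤ n → ∃ S : Finset {j : ι // j ≠ j₀},
          S.card = m ∧ pref α' m ≤ ∏ j ∈ S, β j.1 := by
        intro m hm
        rcases Nat.eq_zero_or_pos m with rfl | hm0
        · exact ⟨∅, by simp, by simp [pref_zero]⟩
        obtain ⟨S', hS'card, hS'⟩ := H3 (m+1) (by omega)
        rw [pref_succ] at hS'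
        set T0 := pref α' m with hT0_def
        have hT0nn : 0 ≤ T0 := pref_nonneg _ hα'0 m
        have hT0a : T0 ≤ a ^ m := pref_le_pow α' a hα'0 hα'a m hm
        have main : ∃ S : Finset ι, j₀ ∉ S ∧ S.card = m ∧ T0 ≤ ∏ j ∈ S, β j := by
          by_cases hj : j₀ ∈ S'
          · refine ⟨S'.erase j₀, Finset.notMem_erase _ _,
              by rw [Finset.card_erase_of_mem hj, hS'card]; omega, ?_⟩
            have heq : ∏ j ∈ S', β j = a * ∏ j ∈ S'.erase j₀, β j := by
              rw [← Finset.mul_prod_erase _ _ hj, hj₀]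
            rcases eq_or_lt_of_le ha0 with h0 | h0
            · have hT00 : T0 ≤ 0 := by
                calc T0 ≤ a ^ m := hT0a
                  _ = 0 := by rw [← h0, zero_pow (by omega : m ≠ 0)]
              exact hT00.trans (Finset.prod_nonneg fun j _ => hβ0 j)
            · have h' : a * T0 ≤ a * ∏ j ∈ S'.erase j₀, β j := by rw [← heq]; exact hS'
              exact le_of_mul_le_mul_left h' h0
          · by_cases hex : ∃ x ∈ S', β x ≤ a
            · obtain ⟨x, hxS, hxa⟩ := hex
              refine ⟨S'.erase x, fun h => hj (Finset.erase_subset _ _ h),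
                by rw [Finset.card_erase_of_mem hxS, hS'card]; omega, ?_⟩
              have heq : ∏ j ∈ S', β j = β x * ∏ j ∈ S'.erase x, β j :=
                (Finset.mul_prod_erase _ _ hxS).symm
              have hprodnn : 0 ≤ ∏ j ∈ S'.erase x, β j := Finset.prod_nonneg fun j _ => hβ0 j
              rcases eq_or_lt_of_le (hβ0 x) with h0 | h0
              · have h00 : a * T0 ≤ 0 := by
                  calc a * T0 ≤ ∏ j ∈ S', β j := hS'
                    _ = 0 := by rw [heq, ← h0, zero_mul]
                rcases eq_or_lt_of_le ha0 with ha' | ha'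
                · have hT00 : T0 ≤ 0 := by
                    calc T0 ≤ a ^ m := hT0a
                      _ = 0 := by rw [← ha', zero_pow (by omega : m ≠ 0)]
                  exact hT00.trans hprodnn
                · have h0' : a * T0 = 0 := le_antisymm h00 (mul_nonneg ha'.le hT0nn)
                  have hT00 : T0 = 0 := by
                    rcases mul_eq_zero.mp h0' with h | h
                    · exact absurd h (ne_of_gt ha')
                    · exact h
                  rw [hT00]; exact hprodnn
              · have hch : β x * T0 ≤ β x * ∏ j ∈ S'.erase x, β j := by
                  calc β x * T0 ≤ a * T0 := mul_le_mul_of_nonneg_right hxa hT0nn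
                    _ ≤ ∏ j ∈ S', β j := hS'
                    _ = β x * ∏ j ∈ S'.erase x, β j := heq
                exact le_of_mul_le_mul_left hch h0
            · push_neg at hex
              have hS'ne : S'.Nonempty := Finset.card_pos.mp (by omega)
              obtain ⟨x, hx⟩ := hS'ne
              refine ⟨S'.erase x, fun h => hj (Finset.erase_subset _ _ h),
                by rw [Finset.card_erase_of_mem hx, hS'card]; omega, ?_⟩
              calc T0 ≤ a ^ m := hT0a
                _ ≤ ∏ j ∈ S'.erase x, β j := by
                    have hc : (S'.erase x).card = m := by
                      rw [Finset.card_erase_of_mem hx, hS'card]; omega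
                    have hpc := pow_card_le_prod' (S'.erase x) β a ha0
                      (fun y hy => (hex y (Finset.erase_subset _ _ hy)).le)
                    rwa [hc] at hpc
        obtain ⟨S, hjS, hScard, hSle⟩ := main
        have hmem : ∀ x ∈ S, x ≠ j₀ := fun x hx h => hjS (by rwa [h] at hx)
        refine ⟨S.subtype (fun j => j ≠ j₀), ?_, ?_⟩
        · rw [Finset.card_subtype, Finset.filter_true_of_mem hmem, hScard]
        · rw [Finset.prod_subtype_eq_prod_filter, Finset.filter_true_of_mem hmem]
          exact hSle
      have IH := ih {j : ι // j ≠ j₀} hcard' α' (fun j => β j.1)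
        hα'0 (fun j k hjk => hαmono j.succ k.succ (Fin.succ_le_succ_iff.mpr hjk)) (fun j => hα1 _)
        (fun j => hβ0 _) (fun j => hβ1 _) H3'
      exact strip_glue α β j₀ hj₀ (abs_le.mpr ⟨by linarith, ha1⟩) IH
    by_cases hc1 : ∃ j₀ : ι, β j₀ = a
    · obtain ⟨j₀, hj₀⟩ := hc1
      exact key β hβ0 hβ1 H3 j₀ hj₀
    · push_neg at hc1
      haveI : Nonempty ι := Fintype.card_pos_iff.mp (by omega)
      obtain ⟨j₀, -, hj₀max⟩ := Finset.exists_max_image Finset.univ β Finset.univ_nonempty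
      have hj₀max' : ∀ j, β j ≤ β j₀ := fun j => hj₀max j (Finset.mem_univ j)
      have hj₀a : a < β j₀ := by
        obtain ⟨S1, hS1card, hS1⟩ := H3 1 (by omega)
        obtain ⟨x, rfl⟩ := Finset.card_eq_one.mp hS1card
        rw [Finset.prod_singleton] at hS1
        have hpa : pref α 1 = a := by rw [pref_succ, pref_zero, mul_one]
        rw [hpa] at hS1
        exact lt_of_le_of_ne (hS1.trans (hj₀max' x)) (Ne.symm (hc1 j₀))
      by_cases hc2 : ∃ j : ι, β j < a
      · -- surgery case
        have hfn : (Finset.univ.filter (fun j : ι => β j < a)).Nonempty := by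
          obtain ⟨j, hj⟩ := hc2; exact ⟨j, Finset.mem_filter.mpr ⟨Finset.mem_univ _, hj⟩⟩
        obtain ⟨j₁, hj₁mem, hj₁max⟩ := Finset.exists_max_image _ β hfn
        have hj₁a : β j₁ < a := (Finset.mem_filter.mp hj₁mem).2
        have hapos : 0 < a := lt_of_le_of_lt (hβ0 j₁) hj₁a
        have hne12 : j₀ ≠ j₁ := fun h => absurd hj₀a (by rw [h]; exact not_lt.mpr hj₁a.le)
        set c := β j₀ * β j₁ / a with hc_def
        have hc0 : 0 ≤ c := div_nonneg (mul_nonneg (hβ0 _) (hβ0 _)) ha0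
        have hcge : β j₁ ≤ c := by
          rw [hc_def, le_div_iff₀ hapos]; nlinarith [hβ0 j₁]
        have hcle : c ≤ β j₀ := by
          rw [hc_def, div_le_iff₀ hapos]; nlinarith [hβ0 j₀]
        have hprodac : a * c = β j₀ * β j₁ := by rw [hc_def]; field_simp
        set β' := Function.update (Function.update β j₀ a) j₁ c with hβ'_def
        have hβ'j₀ : β' j₀ = a := by
          rw [hβ'_def, Function.update_of_ne hne12, Function.update_self]
        have hβ'j₁ : β' j₁ = c := by rw [hβ'_def, Function.update_self]
        have hβ'other : ∀ j, j ≠ j₀ → j ≠ j₁ → β' j = β j := fun j h0 h1 => by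
          rw [hβ'_def, Function.update_of_ne h1, Function.update_of_ne h0]
        have hβ'0 : ∀ j, 0 ≤ β' j := by
          intro j
          by_cases h1 : j = j₁
          · rw [h1, hβ'j₁]; exact hc0
          by_cases h0 : j = j₀
          · rw [h0, hβ'j₀]; exact ha0
          rw [hβ'other j h0 h1]; exact hβ0 j
        have hβ'1 : ∀ j, β' j ≤ 1 := by
          intro j
          by_cases h1 : j = j₁
          · rw [h1, hβ'j₁]; exact hcle.trans (hβ1 j₀)
          by_cases h0 : j = j₀
          · rw [h0, hβ'j₀]; exact ha1
          rw [hβ'other j h0 h1]; exact hβ1 j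
        have hstep1 : MajorizedBy (Wdist β') (Wdist β) :=
          surgery β hβabs j₀ j₁ hne12 a c (hβ0 j₁) hj₁a.le hj₀a.le hcge hcle (hβ1 j₀) hprodac
        have hBoth : ∀ S : Finset ι, j₀ ∈ S → j₁ ∈ S → ∏ j ∈ S, β' j = ∏ j ∈ S, β j := by
          intro S h0 h1
          have h1' : j₁ ∈ S.erase j₀ := Finset.mem_erase.mpr ⟨Ne.symm hne12, h1⟩
          rw [← Finset.mul_prod_erase S β' h0, ← Finset.mul_prod_erase (S.erase j₀) β' h1',
            ← Finset.mul_prod_erase S β h0, ← Finset.mul_prod_erase (S.erase j₀) β h1']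
          have hrest : ∏ j ∈ (S.erase j₀).erase j₁, β' j = ∏ j ∈ (S.erase j₀).erase j₁, β j := by
            refine Finset.prod_congr rfl (fun j hj => ?_)
            have hj1 : j ≠ j₁ := (Finset.mem_erase.mp hj).1
            have hj0 : j ≠ j₀ := (Finset.mem_erase.mp (Finset.mem_erase.mp hj).2).1
            exact hβ'other j hj0 hj1
          rw [hrest, ← mul_assoc, ← mul_assoc, hβ'j₀, hβ'j₁, hprodac]
        have H3' : ∀ m : ℕ, m ≤ n + 1 → ∃ S : Finset ι, S.card = m ∧ pref α m ≤ ∏ j ∈ S, β' j := by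
          intro m hm
          rcases Nat.eq_zero_or_pos m with rfl | hm0
          · exact ⟨∅, by simp, by simp [pref_zero]⟩
          obtain ⟨S', hS'c, hS'le⟩ := H3 m hm
          have stepA : ∃ S₁ : Finset ι, j₀ ∈ S₁ ∧ S₁.card = m ∧ pref α m ≤ ∏ j ∈ S₁, β j := by
            by_cases hj : j₀ ∈ S'
            · exact ⟨S', hj, hS'c, hS'le⟩
            · have hS'ne : S'.Nonempty := Finset.card_pos.mp (by omega)
              obtain ⟨x, hx⟩ := hS'ne
              have hjx : j₀ ∉ S'.erase x := fun h => hj (Finset.erase_subset _ _ h)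
              refine ⟨insert j₀ (S'.erase x), Finset.mem_insert_self _ _, ?_, ?_⟩
              · rw [Finset.card_insert_of_notMem hjx, Finset.card_erase_of_mem hx, hS'c]
                omega
              · calc pref α m ≤ ∏ j ∈ S', β j := hS'le
                  _ = β x * ∏ j ∈ S'.erase x, β j := (Finset.mul_prod_erase _ _ hx).symm
                  _ ≤ β j₀ * ∏ j ∈ S'.erase x, β j :=
                      mul_le_mul_of_nonneg_right (hj₀max' x)
                        (Finset.prod_nonneg fun j _ => hβ0 j)
                  _ = ∏ j ∈ insert j₀ (S'.erase x), β j := (Finset.prod_insert hjx).symm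
          obtain ⟨S₁, hj₀S, hS₁c, hS₁le⟩ := stepA
          by_cases hj₁S : j₁ ∈ S₁
          · exact ⟨S₁, hS₁c, by rw [hBoth S₁ hj₀S hj₁S]; exact hS₁le⟩
          · by_cases hex : ∃ x ∈ S₁, β x < a
            · obtain ⟨x, hxS, hxa⟩ := hex
              have hxj₀ : x ≠ j₀ := fun h => absurd hxa (by rw [h]; exact not_lt.mpr hj₀a.le)
              have hj₁nx : j₁ ∉ S₁.erase x := fun h => hj₁S (Finset.erase_subset _ _ h)
              refine ⟨insert j₁ (S₁.erase x), ?_, ?_⟩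
              · rw [Finset.card_insert_of_notMem hj₁nx, Finset.card_erase_of_mem hxS, hS₁c]
                omega
              · have hj₀S' : j₀ ∈ insert j₁ (S₁.erase x) :=
                  Finset.mem_insert_of_mem (Finset.mem_erase.mpr ⟨Ne.symm hxj₀, hj₀S⟩)
                rw [hBoth _ hj₀S' (Finset.mem_insert_self _ _)]
                have hbx : β x ≤ β j₁ :=
                  hj₁max x (Finset.mem_filter.mpr ⟨Finset.mem_univ _, hxa⟩)
                calc pref α m ≤ ∏ j ∈ S₁, β j := hS₁le
                  _ = β x * ∏ j ∈ S₁.erase x, β j := (Finset.mul_prod_erase _ _ hxS).symm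
                  _ ≤ β j₁ * ∏ j ∈ S₁.erase x, β j :=
                      mul_le_mul_of_nonneg_right hbx (Finset.prod_nonneg fun j _ => hβ0 j)
                  _ = ∏ j ∈ insert j₁ (S₁.erase x), β j := (Finset.prod_insert hj₁nx).symm
            · push_neg at hex
              refine ⟨S₁, hS₁c, ?_⟩
              have h1 : ∏ j ∈ S₁, β' j = a * ∏ j ∈ S₁.erase j₀, β j := by
                rw [← Finset.mul_prod_erase S₁ β' hj₀S, hβ'j₀]
                congr 1
                refine Finset.prod_congr rfl (fun j hj => ?_)
                exact hβ'other j (Finset.mem_erase.mp hj).1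
                  (fun h => hj₁S (by rw [← h]; exact Finset.erase_subset _ _ hj))
              have h2 : a ^ (m-1) ≤ ∏ j ∈ S₁.erase j₀, β j := by
                have hc : (S₁.erase j₀).card = m - 1 := by
                  rw [Finset.card_erase_of_mem hj₀S, hS₁c]
                have hpc := pow_card_le_prod' (S₁.erase j₀) β a ha0
                  (fun y hy => hex y (Finset.erase_subset _ _ hy))
                rwa [hc] at hpc
              have h3 : pref α m ≤ a ^ m := pref_le_pow α a hα0 hαa m hm
              rw [h1]
              calc pref α m ≤ a ^ m := h3
                _ = a * a ^ (m-1) := by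
                    rw [← pow_succ']; congr 1; omega
                _ ≤ a * ∏ j ∈ S₁.erase j₀, β j := mul_le_mul_of_nonneg_left h2 ha0
        exact (key β' hβ'0 hβ'1 H3' j₀ hβ'j₀).trans' hstep1
      · push_neg at hc2
        set β' := Function.update β j₀ a with hβ'_def
        have hstep1 : MajorizedBy (Wdist β') (Wdist β) := raise β hβabs j₀ a ha0 hj₀a.le
        have hβ'0 : ∀ j, 0 ≤ β' j := fun j => by
          rcases eq_or_ne j j₀ with rfl | h
          · rw [hβ'_def]; simpa using ha0
          · rw [hβ'_def, Function.update_of_ne h]; exact hβ0 j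
        have hβ'1 : ∀ j, β' j ≤ 1 := fun j => by
          rcases eq_or_ne j j₀ with rfl | h
          · rw [hβ'_def]; simpa using ha1
          · rw [hβ'_def, Function.update_of_ne h]; exact hβ1 j
        have hβ'a : ∀ j, a ≤ β' j := fun j => by
          rcases eq_or_ne j j₀ with rfl | h
          · rw [hβ'_def]; simp
          · rw [hβ'_def, Function.update_of_ne h]; exact hc2 j
        have H3' : ∀ m : ℕ, m ≤ n + 1 → ∃ S : Finset ι, S.card = m ∧ pref α m ≤ ∏ j ∈ S, β' j := by
          intro m hm
          obtain ⟨S, -, hScard⟩ := Finset.exists_subset_card_eq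
            (by rw [Finset.card_univ, hcard]; omega : m ≤ (Finset.univ : Finset ι).card)
          refine ⟨S, hScard, ?_⟩
          calc pref α m ≤ a ^ m := pref_le_pow α a hα0 hαa m hm
            _ ≤ ∏ j ∈ S, β' j := by
                have hpc := pow_card_le_prod' S β' a ha0 (fun j _ => hβ'a j)
                rwa [hScard] at hpc
        have hβ'j₀ : β' j₀ = a := by rw [hβ'_def]; simp
        exact (key β' hβ'0 hβ'1 H3' j₀ hβ'j₀).trans' hstep1

/-- **Majorization lemma for product distributions.**
If `1 ≥ α₁ ≥ … ≥ αₙ ≥ 0`, `1 ≥ β₁ ≥ … ≥ βₙ ≥ 0` and `∏_{j≤k} αⱼ ≤ ∏_{j≤k} βⱼ`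
for all `k`, with equality at `k = n`, then the product distribution
`P(x) = 2^{-n} ∏ⱼ (1+(-1)^{xⱼ} αⱼ)` is majorized by
`Q(y) = 2^{-n} ∏ⱼ (1+(-1)^{yⱼ} βⱼ)`. -/
theorem product_distribution_majorization
    (n : ℕ) (hn : 1 ≤ n) (α β : Fin n → ℝ)
    (hα0 : ∀ j, 0 ≤ α j) (hα1 : α ⟨0, by omega⟩ ≤ 1)
    (hαmono : ∀ j k : Fin n, j ≤ k → α k ≤ α j)
    (hβ0 : ∀ j, 0 ≤ β j) (hβ1 : β ⟨0, by omega⟩ ≤ 1)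
    (hβmono : ∀ j k : Fin n, j ≤ k → β k ≤ β j)
    (hprod : ∀ k : ℕ, 1 ≤ k → k ≤ n →
      ∏ j ∈ Finset.univ.filter (fun j : Fin n => j.val < k), α j ≤
        ∏ j ∈ Finset.univ.filter (fun j : Fin n => j.val < k), β j)
    (heq : ∏ j, α j = ∏ j, β j) :
    MajorizedBy
      (fun x : Fin n → Bool => (2^n : ℝ)⁻¹ * ∏ j, (1 + (if x j then -1 else 1) * α j))
      (fun y : Fin n → Bool => (2^n : ℝ)⁻¹ * ∏ j, (1 + (if y j then -1 else 1) * β j)) := by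
  have hα1' : ∀ j, α j ≤ 1 := fun j =>
    le_trans (hαmono ⟨0, by omega⟩ j (by simp [Fin.le_def])) hα1
  have hβ1' : ∀ j, β j ≤ 1 := fun j =>
    le_trans (hβmono ⟨0, by omega⟩ j (by simp [Fin.le_def])) hβ1
  have H3 : ∀ m : ℕ, m ≤ n → ∃ S : Finset (Fin n), S.card = m ∧ pref α m ≤ ∏ j ∈ S, β j := by
    intro m hm
    rcases Nat.eq_zero_or_pos m with rfl | hm0
    · exact ⟨∅, by simp, by simp [pref_zero]⟩
    rcases eq_or_lt_of_le hm with rfl | hlt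
    · refine ⟨Finset.univ, by simp, ?_⟩
      rw [pref, Finset.filter_true_of_mem (fun i _ => i.isLt)]
      exact heq.le
    · exact ⟨Finset.univ.filter (fun j : Fin n => j.val < m), card_filter_lt m hm,
        hprod m (by omega) hm⟩
  have h := mainInd n (Fin n) (by simp) α β hα0 hαmono hα1' hβ0 hβ1' H3
  have h2 := h.smul' ((2^n : ℝ)⁻¹) (by positivity)
  exact h2
end

section
/- Let 0 ≤ α_2 ≤ α_1 ≤ 1 and 0 ≤ β_2 ≤ β_1 ≤ 1 with α_1 ≤ β_1 and α_1 α_2 = β_1 β_2. Then the four-outcome probability distribution P = (1/4)·{(1+α_1)(1+α_2), (1+α_1)(1−α_2), (1−α_1)(1+α_2), (1−α_1)(1−α_2)} is majorized by Q = (1/4)·{(1+β_1)(1+β_2), (1+β_1)(1−β_2), (1−β_1)(1+β_2), (1−β_1)(1−β_2)}; in particular (1+α_1)(1+α_2) ≤ (1+β_1)(1+β_2) and (1+α_1)(1+α_2)+(1+α_1)(1−α_2)+(1−α_1)(1+α_2) ≤ (1+β_1)(1+β_2)+(1+β_1)(1−β_2)+(1−β_1)(1+β_2). -/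
/-- **The `n = 2` majorization step.** -/
theorem four_outcome_majorization
    (α₁ α₂ β₁ β₂ : ℝ)
    (hα2 : 0 ≤ α₂) (hα21 : α₂ ≤ α₁) (hα1 : α₁ ≤ 1)
    (hβ2 : 0 ≤ β₂) (hβ21 : β₂ ≤ β₁) (hβ1 : β₁ ≤ 1)
    (h1 : α₁ ≤ β₁) (h2 : α₁ * α₂ = β₁ * β₂) :
    MajorizedBy
      ![(1+α₁)*(1+α₂)/4, (1+α₁)*(1-α₂)/4, (1-α₁)*(1+α₂)/4, (1-α₁)*(1-α₂)/4]
      ![(1+β₁)*(1+β₂)/4, (1+β₁)*(1-β₂)/4, (1-β₁)*(1+β₂)/4, (1-β₁)*(1-β₂)/4] ∧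
    (1+α₁)*(1+α₂) ≤ (1+β₁)*(1+β₂) ∧
    (1+α₁)*(1+α₂) + (1+α₁)*(1-α₂) + (1-α₁)*(1+α₂) ≤
      (1+β₁)*(1+β₂) + (1+β₁)*(1-β₂) + (1-β₁)*(1+β₂) := by
  have key : α₁ + α₂ ≤ β₁ + β₂ := by
    rcases eq_or_lt_of_le (hα2.trans hα21 |>.trans h1) with hb | hb
    · nlinarith
    · have h3 : (β₁ - α₁) * (β₁ - α₂) ≥ 0 := by nlinarith
      have : β₁ * (α₁ + α₂) ≤ β₁ * (β₁ + β₂) := by nlinarith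
      exact le_of_mul_le_mul_left this hb
  refine ⟨⟨?_, ?_⟩, by nlinarith, by nlinarith⟩
  · simp [Fin.sum_univ_succ]; ring
  · intro S
    fin_cases S
    · exact ⟨∅, by decide, by simp⟩
    · refine ⟨{0}, by decide, ?_⟩
      rw [Finset.sum_singleton]
      simp only [Fin.zero_eta, Fin.isValue, Fin.reduceFinMk, Finset.sum_mk,
        Multiset.map_coe, List.map_cons, List.map_nil, Multiset.sum_coe, List.sum_cons,
        List.sum_nil, add_zero, Matrix.cons_val_zero, Matrix.cons_val_one, Matrix.head_cons,
        Matrix.cons_val_two, Matrix.tail_cons, Matrix.cons_val_three]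
      nlinarith
    · refine ⟨{0}, by decide, ?_⟩
      rw [Finset.sum_singleton]
      simp only [Fin.zero_eta, Fin.isValue, Fin.reduceFinMk, Finset.sum_mk,
        Multiset.map_coe, List.map_cons, List.map_nil, Multiset.sum_coe, List.sum_cons,
        List.sum_nil, add_zero, Matrix.cons_val_zero, Matrix.cons_val_one, Matrix.head_cons,
        Matrix.cons_val_two, Matrix.tail_cons, Matrix.cons_val_three]
      nlinarith
    · refine ⟨{0,1}, by decide, ?_⟩
      rw [Finset.sum_insert (by decide), Finset.sum_singleton]
      simp only [Fin.zero_eta, Fin.isValue, Fin.reduceFinMk, Finset.sum_mk,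
        Multiset.map_coe, List.map_cons, List.map_nil, Multiset.sum_coe, List.sum_cons,
        List.sum_nil, add_zero, Matrix.cons_val_zero, Matrix.cons_val_one, Matrix.head_cons,
        Matrix.cons_val_two, Matrix.tail_cons, Matrix.cons_val_three]
      nlinarith
    · refine ⟨{0}, by decide, ?_⟩
      rw [Finset.sum_singleton]
      simp only [Fin.zero_eta, Fin.isValue, Fin.reduceFinMk, Finset.sum_mk,
        Multiset.map_coe, List.map_cons, List.map_nil, Multiset.sum_coe, List.sum_cons,
        List.sum_nil, add_zero, Matrix.cons_val_zero, Matrix.cons_val_one, Matrix.head_cons,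
        Matrix.cons_val_two, Matrix.tail_cons, Matrix.cons_val_three]
      nlinarith
    · refine ⟨{0,1}, by decide, ?_⟩
      rw [Finset.sum_insert (by decide), Finset.sum_singleton]
      simp only [Fin.zero_eta, Fin.isValue, Fin.reduceFinMk, Finset.sum_mk,
        Multiset.map_coe, List.map_cons, List.map_nil, Multiset.sum_coe, List.sum_cons,
        List.sum_nil, add_zero, Matrix.cons_val_zero, Matrix.cons_val_one, Matrix.head_cons,
        Matrix.cons_val_two, Matrix.tail_cons, Matrix.cons_val_three]
      nlinarith
    · refine ⟨{0,1}, by decide, ?_⟩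
      rw [Finset.sum_insert (by decide), Finset.sum_singleton]
      simp only [Fin.zero_eta, Fin.isValue, Fin.reduceFinMk, Finset.sum_mk,
        Multiset.map_coe, List.map_cons, List.map_nil, Multiset.sum_coe, List.sum_cons,
        List.sum_nil, add_zero, Matrix.cons_val_zero, Matrix.cons_val_one, Matrix.head_cons,
        Matrix.cons_val_two, Matrix.tail_cons, Matrix.cons_val_three]
      nlinarith
    · refine ⟨{0,1,2}, by decide, ?_⟩
      rw [Finset.sum_insert (by decide), Finset.sum_insert (by decide), Finset.sum_singleton]
      simp only [Fin.zero_eta, Fin.isValue, Fin.reduceFinMk, Finset.sum_mk,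
        Multiset.map_coe, List.map_cons, List.map_nil, Multiset.sum_coe, List.sum_cons,
        List.sum_nil, add_zero, Matrix.cons_val_zero, Matrix.cons_val_one, Matrix.head_cons,
        Matrix.cons_val_two, Matrix.tail_cons, Matrix.cons_val_three]
      nlinarith
    · refine ⟨{0}, by decide, ?_⟩
      rw [Finset.sum_singleton]
      simp only [Fin.zero_eta, Fin.isValue, Fin.reduceFinMk, Finset.sum_mk,
        Multiset.map_coe, List.map_cons, List.map_nil, Multiset.sum_coe, List.sum_cons,
        List.sum_nil, add_zero, Matrix.cons_val_zero, Matrix.cons_val_one, Matrix.head_cons,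
        Matrix.cons_val_two, Matrix.tail_cons, Matrix.cons_val_three]
      nlinarith
    · refine ⟨{0,1}, by decide, ?_⟩
      rw [Finset.sum_insert (by decide), Finset.sum_singleton]
      simp only [Fin.zero_eta, Fin.isValue, Fin.reduceFinMk, Finset.sum_mk,
        Multiset.map_coe, List.map_cons, List.map_nil, Multiset.sum_coe, List.sum_cons,
        List.sum_nil, add_zero, Matrix.cons_val_zero, Matrix.cons_val_one, Matrix.head_cons,
        Matrix.cons_val_two, Matrix.tail_cons, Matrix.cons_val_three]
      nlinarith
    · refine ⟨{0,1}, by decide, ?_⟩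
      rw [Finset.sum_insert (by decide), Finset.sum_singleton]
      simp only [Fin.zero_eta, Fin.isValue, Fin.reduceFinMk, Finset.sum_mk,
        Multiset.map_coe, List.map_cons, List.map_nil, Multiset.sum_coe, List.sum_cons,
        List.sum_nil, add_zero, Matrix.cons_val_zero, Matrix.cons_val_one, Matrix.head_cons,
        Matrix.cons_val_two, Matrix.tail_cons, Matrix.cons_val_three]
      nlinarith
    · refine ⟨{0,1,2}, by decide, ?_⟩
      rw [Finset.sum_insert (by decide), Finset.sum_insert (by decide), Finset.sum_singleton]
      simp only [Fin.zero_eta, Fin.isValue, Fin.reduceFinMk, Finset.sum_mk,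
        Multiset.map_coe, List.map_cons, List.map_nil, Multiset.sum_coe, List.sum_cons,
        List.sum_nil, add_zero, Matrix.cons_val_zero, Matrix.cons_val_one, Matrix.head_cons,
        Matrix.cons_val_two, Matrix.tail_cons, Matrix.cons_val_three]
      nlinarith
    · refine ⟨{0,1}, by decide, ?_⟩
      rw [Finset.sum_insert (by decide), Finset.sum_singleton]
      simp only [Fin.zero_eta, Fin.isValue, Fin.reduceFinMk, Finset.sum_mk,
        Multiset.map_coe, List.map_cons, List.map_nil, Multiset.sum_coe, List.sum_cons,
        List.sum_nil, add_zero, Matrix.cons_val_zero, Matrix.cons_val_one, Matrix.head_cons,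
        Matrix.cons_val_two, Matrix.tail_cons, Matrix.cons_val_three]
      nlinarith
    · refine ⟨{0,1,2}, by decide, ?_⟩
      rw [Finset.sum_insert (by decide), Finset.sum_insert (by decide), Finset.sum_singleton]
      simp only [Fin.zero_eta, Fin.isValue, Fin.reduceFinMk, Finset.sum_mk,
        Multiset.map_coe, List.map_cons, List.map_nil, Multiset.sum_coe, List.sum_cons,
        List.sum_nil, add_zero, Matrix.cons_val_zero, Matrix.cons_val_one, Matrix.head_cons,
        Matrix.cons_val_two, Matrix.tail_cons, Matrix.cons_val_three]
      nlinarith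
    · refine ⟨{0,1,2}, by decide, ?_⟩
      rw [Finset.sum_insert (by decide), Finset.sum_insert (by decide), Finset.sum_singleton]
      simp only [Fin.zero_eta, Fin.isValue, Fin.reduceFinMk, Finset.sum_mk,
        Multiset.map_coe, List.map_cons, List.map_nil, Multiset.sum_coe, List.sum_cons,
        List.sum_nil, add_zero, Matrix.cons_val_zero, Matrix.cons_val_one, Matrix.head_cons,
        Matrix.cons_val_two, Matrix.tail_cons, Matrix.cons_val_three]
      nlinarith
    · refine ⟨Finset.univ, by decide, ?_⟩
      rw [Fin.sum_univ_four]
      simp only [Fin.zero_eta, Fin.isValue, Fin.reduceFinMk, Finset.sum_mk,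
        Multiset.map_coe, List.map_cons, List.map_nil, Multiset.sum_coe, List.sum_cons,
        List.sum_nil, add_zero, Matrix.cons_val_zero, Matrix.cons_val_one, Matrix.head_cons,
        Matrix.cons_val_two, Matrix.tail_cons, Matrix.cons_val_three]
      nlinarith
end

section
/- Every even pure state of two qubits is Gaussian: for every unit vector ψ ∈ ℂ^4 satisfying (σ^z⊗σ^z)ψ = ψ, there exist real numbers h_{pq} (1 ≤ p < q ≤ 4) and a complex number c with |c| = 1 such that ψ = c · exp(iH₂)|00⟩, where H₂ = i Σ_{p<q} h_{pq} ĉ_p ĉ_q. -/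
open Matrix Complex
open scoped ComplexOrder

noncomputable section

/-- The Jordan–Wigner Majorana operator `ĉ_{p+1}` (0-indexed `p`) on `n` qubits. -/
def majorana (n : ℕ) (p : Fin (2*n)) : Matrix (Fin n → Bool) (Fin n → Bool) ℂ :=
  fun s t =>
    if s = Function.update t ⟨p.val / 2, by omega⟩ (! t ⟨p.val / 2, by omega⟩) then
      (∏ k : Fin n, if k.val < p.val / 2 ∧ t k = true then (-1 : ℂ) else 1) *
        (if p.val % 2 = 0 then 1
         else if t ⟨p.val / 2, by omega⟩ = false then Complex.I else -Complex.I)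
    else 0

/-- The monomial `ĉ(x) = ĉ_1^{x_1} ⋯ ĉ_{2n}^{x_{2n}}` (product in increasing index order). -/
def cMonomial (n : ℕ) (x : Fin (2*n) → Bool) : Matrix (Fin n → Bool) (Fin n → Bool) ℂ :=
  ((List.finRange (2*n)).map (fun p => if x p then majorana n p else 1)).prod

/-- The fermionic product channel with attenuation coefficients `b`. -/
def fermChannel (n : ℕ) (b : Fin (2*n) → ℝ)
    (A : Matrix (Fin n → Bool) (Fin n → Bool) ℂ) :
    Matrix (Fin n → Bool) (Fin n → Bool) ℂ :=
  ∑ x : Fin (2*n) → Bool,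
    ((∏ p, if x p then (b p : ℂ) else 1) * (2^n : ℂ)⁻¹ *
        Matrix.trace ((cMonomial n x)ᴴ * A)) • cMonomial n x

/-- A density matrix: positive semidefinite with unit trace. -/
def IsDensityMatrix {m : Type*} [Fintype m] [DecidableEq m] (ρ : Matrix m m ℂ) : Prop :=
  ρ.PosSemidef ∧ ρ.trace = 1

/-- Von Neumann entropy `S(ρ) = -Tr ρ log ρ` (sum of `-μ log μ` over eigenvalues). -/
def vnEntropy {m : Type*} [Fintype m] [DecidableEq m] (ρ : Matrix m m ℂ) : ℝ :=
  if h : ρ.IsHermitian then ∑ i, Real.negMulLog (h.eigenvalues i) else 0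

/-- The quadratic Hamiltonian `H₂ = i Σ_{p<q} h_{pq} ĉ_p ĉ_q`. -/
def quadH (n : ℕ) (h : Fin (2*n) → Fin (2*n) → ℝ) :
    Matrix (Fin n → Bool) (Fin n → Bool) ℂ :=
  Complex.I • ∑ p : Fin (2*n), ∑ q : Fin (2*n),
    if p < q then (h p q : ℂ) • (majorana n p * majorana n q) else 0

/-- The linear Hamiltonian `H₁ = Σ_p g_p ĉ_p`. -/
def linH (n : ℕ) (g : Fin (2*n) → ℝ) :
    Matrix (Fin n → Bool) (Fin n → Bool) ℂ :=
  ∑ p : Fin (2*n), (g p : ℂ) • majorana n p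

/-- The standard-form Gaussian state `ρ_λ = 2^{-n} ∏_j (I - i λ_j ĉ_{2j-1} ĉ_{2j})`. -/
def rhoLambda (n : ℕ) (lam : Fin n → ℝ) :
    Matrix (Fin n → Bool) (Fin n → Bool) ℂ :=
  (2^n : ℂ)⁻¹ • ((List.finRange n).map (fun j =>
    (1 : Matrix (Fin n → Bool) (Fin n → Bool) ℂ) -
      (Complex.I * (lam j : ℂ)) •
        (majorana n ⟨2*j.val, by omega⟩ * majorana n ⟨2*j.val + 1, by omega⟩))).prod

/-- A Gaussian state: `ρ = U ρ_λ U†` with `U = exp(i H₂ + i H₁)`. -/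
def IsGaussianState (n : ℕ) (ρ : Matrix (Fin n → Bool) (Fin n → Bool) ℂ) : Prop :=
  ∃ (lam : Fin n → ℝ) (h : Fin (2*n) → Fin (2*n) → ℝ) (g : Fin (2*n) → ℝ),
    (∀ j, lam j ∈ Set.Icc (-1 : ℝ) 1) ∧
    ρ = NormedSpace.exp (Complex.I • (quadH n h + linH n g)) * rhoLambda n lam *
        (NormedSpace.exp (Complex.I • (quadH n h + linH n g)))ᴴ

/-- An even Gaussian state: `ρ = U ρ_λ U†` with `U = exp(i H₂)`. -/
def IsEvenGaussianState (n : ℕ) (ρ : Matrix (Fin n → Bool) (Fin n → Bool) ℂ) : Prop :=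
  ∃ (lam : Fin n → ℝ) (h : Fin (2*n) → Fin (2*n) → ℝ),
    (∀ j, lam j ∈ Set.Icc (-1 : ℝ) 1) ∧
    ρ = NormedSpace.exp (Complex.I • quadH n h) * rhoLambda n lam *
        (NormedSpace.exp (Complex.I • quadH n h))ᴴ

/-- Singular values of a real square matrix: square roots of eigenvalues of `AᵀA`
(in an unspecified order). -/
def singVals {m : Type*} [Fintype m] [DecidableEq m] (A : Matrix m m ℝ) (i : m) : ℝ :=
  if h : (Aᵀ * A).IsHermitian then Real.sqrt (h.eigenvalues i) else 0

end
noncomputable section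

/-- The parity operator `P = σ^z ⊗ ⋯ ⊗ σ^z` on `n` qubits. -/
def parityMatrix (n : ℕ) : Matrix (Fin n → Bool) (Fin n → Bool) ℂ :=
  Matrix.diagonal (fun s => ∏ j, if s j then (-1 : ℂ) else 1)

end
noncomputable section EvenGaussianAux

def Mmat (x y : ℝ) : Matrix (Fin 2 → Bool) (Fin 2 → Bool) ℂ := fun s t =>
  if s = fun i => !t i then (if t 0 then (x:ℂ) else -(x:ℂ)) - Complex.I * y else 0

def hfun (x y : ℝ) : Fin (2*2) → Fin (2*2) → ℝ := fun p q =>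
  if p = 0 ∧ q = 2 then x else if p = 1 ∧ q = 2 then y else 0

lemma pi2_eta (s : Fin 2 → Bool) : s = ![s 0, s 1] := by
  funext i; fin_cases i <;> rfl

lemma sum_pi2 {M : Type*} [AddCommMonoid M] (f : (Fin 2 → Bool) → M) :
    ∑ u : Fin 2 → Bool, f u =
      f ![false, false] + f ![false, true] + f ![true, false] + f ![true, true] := by
  rw [← Equiv.sum_comp (⟨fun p : Bool × Bool => ![p.1, p.2], fun s => (s 0, s 1),
      by rintro ⟨a, b⟩; simp, fun s => (pi2_eta s).symm⟩ : Bool × Bool ≃ (Fin 2 → Bool)) f]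
  rw [Fintype.sum_prod_type]
  simp [Fintype.sum_bool]
  abel

lemma neg_eq_Mmat (x y : ℝ) :
    -((x:ℂ) • (majorana 2 0 * majorana 2 2) + (y:ℂ) • (majorana 2 1 * majorana 2 2))
      = Mmat x y := by
  ext s t
  rw [pi2_eta s, pi2_eta t]
  rcases s 0 <;> rcases s 1 <;> rcases t 0 <;> rcases t 1 <;>
    simp [Mmat, Matrix.mul_apply, sum_pi2, majorana, Function.update, funext_iff,
      Fin.forall_fin_two, Fin.prod_univ_two] <;> ring

lemma quadH_eq (x y : ℝ) : Complex.I • quadH 2 (hfun x y) = Mmat x y := by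
  rw [← neg_eq_Mmat, quadH]
  rw [show ∑ p : Fin (2*2), ∑ q : Fin (2*2),
      (if p < q then ((hfun x y) p q : ℂ) • (majorana 2 p * majorana 2 q) else 0)
      = (x:ℂ) • (majorana 2 0 * majorana 2 2) + (y:ℂ) • (majorana 2 1 * majorana 2 2) by
    rw [Fin.sum_univ_four]
    rw [Fin.sum_univ_four, Fin.sum_univ_four, Fin.sum_univ_four, Fin.sum_univ_four]
    norm_num [hfun]
    simp (config := { decide := true })]
  rw [smul_smul, Complex.I_mul_I, neg_one_smul]

lemma Mmat_sq (x y : ℝ) :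
    Mmat x y * Mmat x y
      = (-(x^2 + y^2) : ℝ) • (1 : Matrix (Fin 2 → Bool) (Fin 2 → Bool) ℂ) := by
  ext s t
  rw [pi2_eta s, pi2_eta t]
  rcases s 0 <;> rcases s 1 <;> rcases t 0 <;> rcases t 1 <;>
    simp [Mmat, Matrix.mul_apply, sum_pi2, Matrix.one_apply, funext_iff,
      Fin.forall_fin_two, Complex.ext_iff] <;>
    constructor <;> simp [← Complex.ofReal_pow] <;> ring

lemma exp_Mmat (x y r : ℝ) (hr : Real.sqrt (x^2+y^2) = r) :
    NormedSpace.exp (Mmat x y) =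
      Real.cos r • (1 : Matrix (Fin 2 → Bool) (Fin 2 → Bool) ℂ)
        + (Real.sin r / r) • Mmat x y := by
  letI : SeminormedRing (Matrix (Fin 2 → Bool) (Fin 2 → Bool) ℂ) := Matrix.linftyOpSemiNormedRing
  letI : NormedRing (Matrix (Fin 2 → Bool) (Fin 2 → Bool) ℂ) := Matrix.linftyOpNormedRing
  letI : NormedAlgebra ℝ (Matrix (Fin 2 → Bool) (Fin 2 → Bool) ℂ) := Matrix.linftyOpNormedAlgebra
  have hrr : x^2 + y^2 = r^2 := by
    rw [← hr, Real.sq_sqrt]; positivity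
  have hM2 : Mmat x y * Mmat x y = (-(r^2) : ℝ) • 1 := by rw [Mmat_sq, hrr]
  rcases eq_or_ne r 0 with h0 | h0
  · have hx : x = 0 ∧ y = 0 := by
      constructor <;> nlinarith [hrr, sq_nonneg x, sq_nonneg y, h0 ▸ hrr]
    have hM : Mmat x y = 0 := by
      ext s t; simp [Mmat, hx.1, hx.2]
    rw [hM, h0]
    simp [NormedSpace.exp_zero]
  · set M := Mmat x y with hM
    let φ : ℂ →+* Matrix (Fin 2 → Bool) (Fin 2 → Bool) ℂ :=
      { toFun := fun z => z.re • (1 : Matrix (Fin 2 → Bool) (Fin 2 → Bool) ℂ) + (z.im / r) • M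
        map_one' := by simp
        map_zero' := by simp
        map_add' := by
          intro z w
          simp only [Complex.add_re, Complex.add_im]
          match_scalars <;> ring
        map_mul' := by
          intro z w
          simp only [add_mul, mul_add, smul_mul_assoc, mul_smul_comm, one_mul, mul_one,
            hM2, Complex.mul_re, Complex.mul_im, smul_smul]
          match_scalars <;> field_simp <;> ring }
    have hφcont : Continuous φ := by
      show Continuous fun z : ℂ =>
        z.re • (1 : Matrix (Fin 2 → Bool) (Fin 2 → Bool) ℂ) + (z.im / r) • M
      fun_prop
    have hφM : φ ((r : ℂ) * Complex.I) = M := by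
      show (((r:ℂ) * Complex.I).re) • (1 : Matrix (Fin 2 → Bool) (Fin 2 → Bool) ℂ)
          + ((((r:ℂ) * Complex.I).im) / r) • M = M
      simp [div_self h0]
    calc NormedSpace.exp M = NormedSpace.exp M := by
          rfl
      _ = NormedSpace.exp (φ ((r:ℂ) * Complex.I)) := by rw [hφM]
      _ = φ (NormedSpace.exp ((r:ℂ) * Complex.I)) := (NormedSpace.map_exp φ hφcont _).symm
      _ = φ (Complex.exp ((r:ℂ) * Complex.I)) := by
          rw [Complex.exp_eq_exp_ℂ]
      _ = Real.cos r • 1 + (Real.sin r / r) • M := by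
          rw [Complex.exp_mul_I]
          show ((Complex.cos r + Complex.sin r * Complex.I).re)
                • (1 : Matrix (Fin 2 → Bool) (Fin 2 → Bool) ℂ)
              + (((Complex.cos r + Complex.sin r * Complex.I).im) / r) • M = _
          simp [Complex.cos_ofReal_re, Complex.sin_ofReal_re]

end EvenGaussianAux


/-- **Every even pure state of two qubits is Gaussian.** -/
theorem even_two_qubit_state_is_gaussian
    (ψ : (Fin 2 → Bool) → ℂ) (hunit : ∑ s, Complex.normSq (ψ s) = 1)
    (heven : (parityMatrix 2).mulVec ψ = ψ) :
    ∃ (h : Fin (2*2) → Fin (2*2) → ℝ) (c : ℂ), ‖c‖ = 1 ∧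
      ψ = c • (NormedSpace.exp (Complex.I • quadH 2 h)).mulVec
        (Pi.single (fun _ => false) 1) := by
  classical
  -- names for basis states
  have e00 : (fun _ : Fin 2 => false) = ![false, false] := by
    funext i; fin_cases i <;> rfl
  -- odd components vanish
  have hodd : ∀ v : Fin 2 → Bool, (∏ j, if v j then (-1 : ℂ) else 1) = -1 → ψ v = 0 := by
    intro v hv
    have h1 := congrFun heven v
    rw [parityMatrix, Matrix.mulVec_diagonal, hv] at h1
    have : -ψ v = ψ v := by linear_combination h1
    linear_combination -this / 2
  have hodd1 : ψ ![false, true] = 0 := by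
    apply hodd; simp [Fin.prod_univ_two]
  have hodd2 : ψ ![true, false] = 0 := by
    apply hodd; simp [Fin.prod_univ_two]
  set a := ψ ![false, false] with ha
  set b := ψ ![true, true] with hb
  have hn : Complex.normSq a + Complex.normSq b = 1 := by
    rw [sum_pi2 (fun s => Complex.normSq (ψ s))] at hunit
    rw [hodd1, hodd2] at hunit
    simpa using hunit
  set A : ℝ := ‖a‖ with hA
  set c : ℂ := if a = 0 then 1 else a / (A : ℂ) with hc
  have hcnorm : ‖c‖ = 1 := by
    rw [hc]
    split_ifs with h
    · simp
    · have hA0 : A ≠ 0 := by simpa [hA] using h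
      rw [norm_div, Complex.norm_real, Real.norm_eq_abs]
      rw [← hA, _root_.abs_of_nonneg (norm_nonneg a), div_self hA0]
  set B : ℂ := (starRingEnd ℂ) c * b with hB
  have hcA : c * (A : ℂ) = a := by
    rw [hc]
    split_ifs with h
    · simp [hA, h]
    · have hA0 : (A : ℂ) ≠ 0 := by
        simpa [hA, Complex.ofReal_eq_zero] using h
      field_simp
  have hcB : c * B = b := by
    have h1 : c * (starRingEnd ℂ) c = Complex.normSq c := Complex.mul_conj c
    have h2 : Complex.normSq c = 1 := by
      have := hcnorm
      rw [Complex.normSq_eq_norm_sq, this]; norm_num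
    rw [hB, ← mul_assoc, h1, h2]
    simp
  have hBb : ‖B‖ = ‖b‖ := by
    rw [hB, norm_mul]
    have : ‖(starRingEnd ℂ) c‖ = 1 := by
      rw [Complex.norm_conj, hcnorm]
    rw [this, one_mul]
  have hA0 : 0 ≤ A := norm_nonneg a
  have hAB : A^2 + ‖B‖ ^ 2 = 1 := by
    rw [hBb, hA, Complex.sq_norm, Complex.sq_norm, hn]
  have hA1 : A ≤ 1 := by nlinarith [sq_nonneg ‖B‖]
  set r : ℝ := Real.arccos A with hr
  have hrpos : 0 ≤ r := Real.arccos_nonneg A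
  have hcos : Real.cos r = A := Real.cos_arccos (by linarith) hA1
  have hsin : Real.sin r = ‖B‖ := by
    rw [hr, Real.sin_arccos]
    have : 1 - A^2 = ‖B‖ ^ 2 := by linarith
    rw [this, Real.sqrt_sq (norm_nonneg B)]
  set x : ℝ := -(B.re) * r / Real.sin r with hx
  set y : ℝ := -(B.im) * r / Real.sin r with hy
  have hsqrt : Real.sqrt (x^2 + y^2) = r := by
    by_cases hB0 : B = 0
    · have hx0 : x = 0 := by rw [hx, hB0]; simp
      have hy0 : y = 0 := by rw [hy, hB0]; simp
      have hA1' : A = 1 := by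
        have : ‖B‖ = 0 := by rw [hB0]; simp
        nlinarith [hAB]
      have : r = 0 := by rw [hr, hA1', Real.arccos_one]
      rw [hx0, hy0, this]; simp
    · have hs0 : Real.sin r ≠ 0 := by
        rw [hsin]; simpa using hB0
      have hxy : x^2 + y^2 = r^2 := by
        have hnB : B.re^2 + B.im^2 = Real.sin r ^ 2 := by
          rw [hsin, Complex.sq_norm, Complex.normSq_apply]; ring
        rw [hx, hy]
        field_simp
        nlinarith [hnB]
      rw [hxy, Real.sqrt_sq hrpos]
  have hbr : ((Real.sin r / r : ℝ) : ℂ) * (-(x:ℂ) - Complex.I * y) = B := by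
    by_cases hB0 : B = 0
    · have hx0 : x = 0 := by rw [hx, hB0]; simp
      have hy0 : y = 0 := by rw [hy, hB0]; simp
      rw [hx0, hy0, hB0]; simp
    · have hs0 : Real.sin r ≠ 0 := by
        rw [hsin]; simpa using hB0
      have hr0 : r ≠ 0 := by
        intro h
        rw [h, Real.sin_zero] at hs0
        exact hs0 rfl
      have h1 : Real.sin r / r * (-x) = B.re := by
        rw [hx]; field_simp
      have h2 : Real.sin r / r * (-y) = B.im := by
        rw [hy]; field_simp
      calc ((Real.sin r / r : ℝ) : ℂ) * (-(x:ℂ) - Complex.I * y)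
          = ((Real.sin r / r * (-x) : ℝ) : ℂ)
            + ((Real.sin r / r * (-y) : ℝ) : ℂ) * Complex.I := by push_cast; ring
        _ = (B.re : ℂ) + (B.im : ℂ) * Complex.I := by rw [h1, h2]
        _ = B := Complex.re_add_im B
  refine ⟨hfun x y, c, hcnorm, ?_⟩
  rw [quadH_eq x y, exp_Mmat x y r hsqrt]
  funext v
  have hv : v = ![v 0, v 1] := pi2_eta v
  have hM00 : Mmat x y ![false,false] ![false,false] = 0 := by
    rw [Mmat]
    simp [funext_iff, Fin.forall_fin_two]
  have hM11 : Mmat x y ![true,true] ![false,false] = -(x:ℂ) - Complex.I * y := by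
    rw [Mmat]
    rw [if_pos (by funext i; fin_cases i <;> rfl)]
    norm_num
  have hMft : Mmat x y ![false,true] ![false,false] = 0 := by
    rw [Mmat]
    simp [funext_iff, Fin.forall_fin_two]
  have hMtf : Mmat x y ![true,false] ![false,false] = 0 := by
    rw [Mmat]
    simp [funext_iff, Fin.forall_fin_two]
  have hmv : ∀ s, ((Real.cos r • (1 : Matrix (Fin 2 → Bool) (Fin 2 → Bool) ℂ)
      + (Real.sin r / r) • Mmat x y).mulVec (Pi.single (fun _ => false) 1)) s
      = Real.cos r • (1 : Matrix (Fin 2 → Bool) (Fin 2 → Bool) ℂ) s ![false,false]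
        + (Real.sin r / r) • Mmat x y s ![false,false] := by
    intro s
    rw [e00, Matrix.mulVec_single]
    simp [Matrix.add_apply]
  rw [hv]
  rcases hv0 : v 0 <;> rcases hv1 : v 1
  · show ψ ![false, false] = c * _
    rw [hmv]
    rw [hM00, Matrix.one_apply_eq, ← ha, ← hcA, ← hcos]
    simp [Complex.real_smul]
  · show ψ ![false, true] = c * _
    rw [hmv, hMft]
    rw [Matrix.one_apply_ne (by simp [funext_iff, Fin.forall_fin_two])]
    simp [hodd1]
  · show ψ ![true, false] = c * _
    rw [hmv, hMtf]
    rw [Matrix.one_apply_ne (by simp [funext_iff, Fin.forall_fin_two])]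
    simp [hodd2]
  · show ψ ![true, true] = c * _
    rw [hmv, hM11]
    rw [Matrix.one_apply_ne (by simp [funext_iff, Fin.forall_fin_two])]
    rw [← hb, ← hcB, ← hbr]
    simp [Complex.real_smul]
end
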